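/- (Combined step lower bound) Under the dynamic-threshold confidence assumption with factor f ∈ (0,1), any parallel decoding schedule (A_1,...,A_R) for a length-n sequence x satisfies R ≥ max( (-log p(x)) / log((n+1)/((1-f)n+1)), (-log p(x) - ε)/f ), where ε is the total approximation error. -/

import Mathlib

open Finset Real

noncomputable def marg {V : Type*} [Fintype V] [DecidableEq V] {n : ℕ}
    (p : (Fin n → V) → ℝ) (C : Finset (Fin n)) (x : Fin n → V) : ℝ :=
  ∑ y : Fin n → V, if ∀ i ∈ C, y i = x i then p y else 0

noncomputable def condProb {V : Type*} [Fintype V] [DecidableEq V] {n : ℕ}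
    (p : (Fin n → V) → ℝ) (A C : Finset (Fin n)) (x : Fin n → V) : ℝ :=
  marg p (A ∪ C) x / marg p C x

def prefixC {n R : ℕ} (A : Fin R → Finset (Fin n)) (r : Fin R) : Finset (Fin n) :=
  (Finset.Iio r).biUnion A

section helpers
variable {V : Type*} [Fintype V] [DecidableEq V] {n : ℕ}
variable {p : (Fin n → V) → ℝ} {x : Fin n → V}

lemma le_marg (hp : ∀ y, 0 ≤ p y) (C : Finset (Fin n)) : p x ≤ marg p C x := by
  have := Finset.single_le_sum (f := fun y => if ∀ i ∈ C, y i = x i then p y else 0)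
    (fun y _ => by split_ifs with h; exacts [hp y, le_rfl]) (Finset.mem_univ x)
  simpa [marg] using this

lemma marg_mono (hp : ∀ y, 0 ≤ p y) {C C' : Finset (Fin n)} (h : C ⊆ C') :
    marg p C' x ≤ marg p C x := by
  refine Finset.sum_le_sum fun y _ => ?_
  by_cases h1 : ∀ i ∈ C', y i = x i
  · have h2 : ∀ i ∈ C, y i = x i := fun i hi => h1 i (h hi)
    rw [if_pos h1, if_pos h2]
  · rw [if_neg h1]
    split_ifs with h2
    · exact hp y
    · exact le_rfl

lemma marg_empty (hsum : ∑ y, p y = 1) : marg p (∅ : Finset (Fin n)) x = 1 := by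
  simp [marg, hsum]

lemma marg_univ : marg p (Finset.univ : Finset (Fin n)) x = p x := by
  unfold marg
  have : ∀ y : Fin n → V, (if ∀ i ∈ Finset.univ, y i = x i then p y else 0)
      = if y = x then p y else 0 := by
    intro y; congr 1; simp [funext_iff]
  rw [Finset.sum_congr rfl fun y _ => this y, Finset.sum_ite_eq' Finset.univ x p]
  simp

lemma marg_pos (hp : ∀ y, 0 ≤ p y) (hx : 0 < p x) (C : Finset (Fin n)) :
    0 < marg p C x := lt_of_lt_of_le hx (le_marg hp C)

lemma union_bound (hp : ∀ y, 0 ≤ p y) (A C : Finset (Fin n)) :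
    marg p C x - marg p (A ∪ C) x ≤ ∑ i ∈ A, (marg p C x - marg p ({i} ∪ C) x) := by
  have hR : ∀ i ∈ A, marg p C x - marg p ({i} ∪ C) x
      = ∑ y : Fin n → V, ((if ∀ j ∈ C, y j = x j then p y else 0)
          - (if ∀ j ∈ ({i} ∪ C : Finset (Fin n)), y j = x j then p y else 0)) := by
    intro i _; unfold marg; rw [← Finset.sum_sub_distrib]
  rw [Finset.sum_congr rfl hR, Finset.sum_comm]
  unfold marg
  rw [← Finset.sum_sub_distrib]
  refine Finset.sum_le_sum fun y _ => ?_
  by_cases hPC : ∀ j ∈ C, y j = x j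
  · by_cases hPAC : ∀ j ∈ A ∪ C, y j = x j
    · have h1 : ∀ i ∈ A, ∀ j ∈ ({i} ∪ C : Finset (Fin n)), y j = x j := by
        intro i hi j hj
        rcases Finset.mem_union.1 hj with hj | hj
        · exact hPAC j (Finset.mem_union.2 (Or.inl (by simpa using Finset.mem_singleton.1 hj ▸ hi)))
        · exact hPC j hj
      rw [if_pos hPC, if_pos hPAC, sub_self]
      refine Finset.sum_nonneg fun i hi => ?_
      rw [if_pos (h1 i hi), sub_self]
    · push_neg at hPAC
      obtain ⟨i, hiAC, hiy⟩ := hPAC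
      have hiA : i ∈ A := by
        rcases Finset.mem_union.1 hiAC with h | h
        · exact h
        · exact absurd (hPC i h) hiy
      have hterm : (if ∀ j ∈ C, y j = x j then p y else 0)
          - (if ∀ j ∈ ({i} ∪ C : Finset (Fin n)), y j = x j then p y else 0) = p y := by
        rw [if_pos hPC, if_neg, sub_zero]
        intro h; exact hiy (h i (Finset.mem_union.2 (Or.inl (Finset.mem_singleton_self i))))
      have hmain : (if ∀ j ∈ C, y j = x j then p y else 0)
          - (if ∀ j ∈ (A ∪ C : Finset (Fin n)), y j = x j then p y else 0) = p y := by
        rw [if_pos hPC, if_neg, sub_zero]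
        intro h; exact hiy (h i hiAC)
      rw [hmain]
      calc p y = (if ∀ j ∈ C, y j = x j then p y else 0)
          - (if ∀ j ∈ ({i} ∪ C : Finset (Fin n)), y j = x j then p y else 0) := hterm.symm
        _ ≤ _ := by
            refine Finset.single_le_sum (f := fun i => (if ∀ j ∈ C, y j = x j then p y else 0)
              - (if ∀ j ∈ ({i} ∪ C : Finset (Fin n)), y j = x j then p y else 0)) ?_ hiA
            intro i _
            split_ifs with h
            · simp
            · simpa using hp y
  · have h1 : ¬ ∀ j ∈ A ∪ C, y j = x j := fun h => hPC fun j hj => h j (Finset.mem_union.2 (Or.inr hj))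
    have h2 : ∀ i, ¬ ∀ j ∈ ({i} ∪ C : Finset (Fin n)), y j = x j :=
      fun i h => hPC fun j hj => h j (Finset.mem_union.2 (Or.inr hj))
    rw [if_neg hPC, if_neg h1]
    simp only [if_neg hPC, if_neg (h2 _)]
    simp
end helpers
theorem step_lower_bound_combined {V : Type*} [Fintype V] [DecidableEq V] {n R : ℕ}
    (p : (Fin n → V) → ℝ) (hp : ∀ y, 0 ≤ p y) (hsum : ∑ y, p y = 1)
    (A : Fin R → Finset (Fin n))
    (hdisj : ∀ r s, r ≠ s → Disjoint (A r) (A s))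
    (hcover : Finset.univ.biUnion A = Finset.univ)
    (x : Fin n → V) (hx : 0 < p x)
    {f : ℝ} (hf0 : 0 < f) (hf1 : f < 1)
    (hconf : ∀ r, ∀ i ∈ A r,
      (1 + ((A r).card : ℝ)) * (1 - condProb p {i} (prefixC A r) x) ≤ f)
    (ε : ℝ)
    (hε : ε = |(-Real.log (p x)) -
      ∑ r, ∑ i ∈ A r, (-Real.log (condProb p {i} (prefixC A r) x))|) :
    (R : ℝ) ≥ max ((-Real.log (p x)) / Real.log (((n : ℝ) + 1) / ((1 - f) * n + 1)))
      ((-Real.log (p x) - ε) / f) := by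
  have Mpos : ∀ C : Finset (Fin n), 0 < marg p C x := marg_pos hp hx
  -- chain rule
  set D : ℕ → Finset (Fin n) :=
    fun m => (Finset.univ.filter fun s : Fin R => (s : ℕ) < m).biUnion A with hD
  set g : ℕ → ℝ := fun m => marg p (D m) x with hg
  have hD0 : D 0 = ∅ := by simp [hD]
  have hDR : D R = Finset.univ := by
    have : (Finset.univ.filter fun s : Fin R => (s : ℕ) < R) = Finset.univ := by
      apply Finset.filter_true_of_mem; intro s _; exact s.isLt
    rw [hD]; dsimp only; rw [this, hcover]
  have hpre : ∀ r : Fin R, prefixC A r = D (r : ℕ) := by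
    intro r; ext i
    simp only [prefixC, hD, Finset.mem_biUnion, Finset.mem_Iio, Finset.mem_filter,
      Finset.mem_univ, true_and, Fin.lt_def]
  have hDsucc : ∀ r : Fin R, A r ∪ D (r : ℕ) = D ((r : ℕ) + 1) := by
    intro r; ext i
    simp only [hD, Finset.mem_union, Finset.mem_biUnion, Finset.mem_filter,
      Finset.mem_univ, true_and, Nat.lt_succ_iff]
    constructor
    · rintro (h | ⟨s, hs, h⟩)
      · exact ⟨r, le_rfl, h⟩
      · exact ⟨s, le_of_lt hs, h⟩
    · rintro ⟨s, hs, h⟩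
      rcases lt_or_eq_of_le hs with hs | hs
      · exact Or.inr ⟨s, hs, h⟩
      · left; rwa [show s = r from Fin.ext hs] at h
  have tele : ∀ M : ℕ, (∏ m ∈ Finset.range M, g (m + 1) / g m) = g M / g 0 := by
    intro M; induction M with
    | zero => simp only [Finset.prod_range_zero]; exact (div_self (Mpos (D 0)).ne').symm
    | succ M ih =>
        rw [Finset.prod_range_succ, ih]
        have h1 := (Mpos (D M)).ne'
        have h2 := (Mpos (D 0)).ne'
        rw [div_mul_div_comm, mul_comm (g M) (g (M + 1))]; exact mul_div_mul_right _ _ h1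
  have chain : p x = ∏ r : Fin R, condProb p (A r) (prefixC A r) x := by
    have h1 : ∀ r : Fin R, condProb p (A r) (prefixC A r) x = g ((r : ℕ) + 1) / g (r : ℕ) := by
      intro r
      rw [condProb, hpre r]
      rw [show marg p (A r ∪ D (r : ℕ)) x = g ((r : ℕ) + 1) from by
        rw [hg]; dsimp only; rw [← hDsucc r]]
    rw [Finset.prod_congr rfl fun r _ => h1 r,
      Fin.prod_univ_eq_prod_range (fun m => g (m + 1) / g m) R, tele R]
    rw [hg]; dsimp only; rw [hD0, hDR, marg_univ, marg_empty hsum, div_one]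
  -- basic facts about condProbs
  have hQpos : ∀ r : Fin R, 0 < condProb p (A r) (prefixC A r) x :=
    fun r => div_pos (Mpos _) (Mpos _)
  have hqpos : ∀ (r : Fin R) (i : Fin n), 0 < condProb p {i} (prefixC A r) x :=
    fun r i => div_pos (Mpos _) (Mpos _)
  have hq_le1 : ∀ (r : Fin R) (i : Fin n), condProb p {i} (prefixC A r) x ≤ 1 :=
    fun r i => (div_le_one (Mpos _)).2 (marg_mono hp Finset.subset_union_right)
  -- union bound per round
  have hub : ∀ r : Fin R, 1 - condProb p (A r) (prefixC A r) x ≤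
      ∑ i ∈ A r, (1 - condProb p {i} (prefixC A r) x) := by
    intro r
    have h1 : 1 - condProb p (A r) (prefixC A r) x =
        (marg p (prefixC A r) x - marg p (A r ∪ prefixC A r) x) / marg p (prefixC A r) x := by
      rw [condProb, sub_div, div_self (Mpos _).ne']
    have h2 : ∀ i ∈ A r, 1 - condProb p {i} (prefixC A r) x =
        (marg p (prefixC A r) x - marg p ({i} ∪ prefixC A r) x) / marg p (prefixC A r) x := by
      intro i _; rw [condProb, sub_div, div_self (Mpos _).ne']
    rw [h1, Finset.sum_congr rfl h2, ← Finset.sum_div]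
    exact (div_le_div_iff_of_pos_right (Mpos _)).2 (union_bound hp (A r) (prefixC A r))
  -- confidence bound rearranged
  have hconf' : ∀ r : Fin R, ∀ i ∈ A r,
      1 - condProb p {i} (prefixC A r) x ≤ f / (1 + ((A r).card : ℝ)) := by
    intro r i hi
    have hk : (0:ℝ) < 1 + ((A r).card : ℝ) := by positivity
    rw [le_div_iff₀ hk]
    have := hconf r i hi
    linarith [this]
  have hcard : ∀ r : Fin R, ((A r).card : ℝ) ≤ (n : ℝ) := by
    intro r
    exact_mod_cast (Finset.card_le_univ (A r)).trans_eq (by simp)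
  -- Part 1: per-round probability lower bound
  have hQlb : ∀ r : Fin R, ((1 - f) * n + 1) / ((n : ℝ) + 1)
      ≤ condProb p (A r) (prefixC A r) x := by
    intro r
    set k : ℝ := ((A r).card : ℝ) with hkdef
    have hk0 : (0:ℝ) ≤ k := Nat.cast_nonneg _
    have hkn : k ≤ (n : ℝ) := hcard r
    have hs : ∑ i ∈ A r, (1 - condProb p {i} (prefixC A r) x) ≤ k * (f / (1 + k)) := by
      calc ∑ i ∈ A r, (1 - condProb p {i} (prefixC A r) x)
          ≤ ∑ _i ∈ A r, f / (1 + k) := Finset.sum_le_sum (hconf' r)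
        _ = k * (f / (1 + k)) := by rw [Finset.sum_const, nsmul_eq_mul]
    have h1 : 1 - k * (f / (1 + k)) ≤ condProb p (A r) (prefixC A r) x := by
      have := hub r
      linarith
    refine le_trans ?_ h1
    have hk1 : (0:ℝ) < 1 + k := by positivity
    have heq : 1 - k * (f / (1 + k)) = (1 + k - k * f) / (1 + k) := by field_simp
    rw [heq, div_le_div_iff₀ (by positivity) hk1]
    nlinarith [mul_nonneg hf0.le (sub_nonneg.2 hkn)]
  -- Part 1 assembled
  have hden_pos : (0:ℝ) < (1 - f) * (n:ℝ) + 1 := by nlinarith [Nat.cast_nonneg (α := ℝ) n]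
  set L : ℝ := Real.log (((n : ℝ) + 1) / ((1 - f) * n + 1)) with hL
  have hL0 : 0 ≤ L := by
    apply Real.log_nonneg
    rw [le_div_iff₀ hden_pos]
    nlinarith [Nat.cast_nonneg (α := ℝ) n]
  have hlogQ : ∀ r : Fin R, -Real.log (condProb p (A r) (prefixC A r) x) ≤ L := by
    intro r
    have h0 : 0 < ((1 - f) * (n:ℝ) + 1) / ((n:ℝ) + 1) := div_pos hden_pos (by positivity)
    rw [← Real.log_inv, hL, ← one_div_div ((1 - f) * (n:ℝ) + 1) ((n:ℝ) + 1)]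
    have hinv : (condProb p (A r) (prefixC A r) x)⁻¹
        ≤ 1 / (((1 - f) * (n:ℝ) + 1) / ((n:ℝ) + 1)) := by
      rw [inv_eq_one_div]
      exact one_div_le_one_div_of_le h0 (hQlb r)
    exact Real.log_le_log (inv_pos.2 (hQpos r)) hinv
  have hsum1 : -Real.log (p x) ≤ (R : ℝ) * L := by
    have hlog : Real.log (p x) = ∑ r : Fin R, Real.log (condProb p (A r) (prefixC A r) x) := by
      rw [chain]
      exact Real.log_prod fun r _ => (hQpos r).ne'
    rw [hlog, ← Finset.sum_neg_distrib]
    calc ∑ r : Fin R, -Real.log (condProb p (A r) (prefixC A r) x)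
        ≤ ∑ _r : Fin R, L := Finset.sum_le_sum fun r _ => hlogQ r
      _ = (R : ℝ) * L := by rw [Finset.sum_const, nsmul_eq_mul, Finset.card_univ, Fintype.card_fin]
  have goal1 : (-Real.log (p x)) / L ≤ (R : ℝ) := by
    rcases eq_or_lt_of_le hL0 with h | h
    · rw [← h, div_zero]; positivity
    · rw [div_le_iff₀ h]; exact hsum1
  -- Part 2: per-index log bound
  have hlogq : ∀ r : Fin R, ∀ i ∈ A r,
      -Real.log (condProb p {i} (prefixC A r) x) ≤ f / ((A r).card : ℝ) := by
    intro r i hi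
    set q : ℝ := condProb p {i} (prefixC A r) x with hqdef
    set k : ℝ := ((A r).card : ℝ) with hkdef
    have hk1 : (1:ℝ) ≤ k := by
      rw [hkdef]; exact_mod_cast Finset.card_pos.2 ⟨i, hi⟩
    have hq0 : 0 < q := hqpos r i
    have hq1 : q ≤ 1 := hq_le1 r i
    have hc : (1 + k) * (1 - q) ≤ f := hconf r i hi
    have h1 : -Real.log q ≤ (1 - q) / q := by
      have := Real.log_le_sub_one_of_pos (show (0:ℝ) < q⁻¹ by positivity)
      rw [Real.log_inv] at this
      have : -Real.log q ≤ q⁻¹ - 1 := this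
      calc -Real.log q ≤ q⁻¹ - 1 := this
        _ = (1 - q) / q := by field_simp
    refine h1.trans ?_
    rw [div_le_div_iff₀ hq0 (by linarith : (0:ℝ) < k)]
    nlinarith [mul_nonneg (sub_nonneg.2 hf1.le) (sub_nonneg.2 hq1)]
  have hsum2 : ∑ r : Fin R, ∑ i ∈ A r, (-Real.log (condProb p {i} (prefixC A r) x))
      ≤ (R : ℝ) * f := by
    have hround : ∀ r : Fin R,
        ∑ i ∈ A r, (-Real.log (condProb p {i} (prefixC A r) x)) ≤ f := by
      intro r
      rcases Finset.eq_empty_or_nonempty (A r) with h | h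
      · rw [h]; simp [hf0.le]
      · have hk : (0:ℝ) < ((A r).card : ℝ) := by exact_mod_cast Finset.card_pos.2 h
        calc ∑ i ∈ A r, (-Real.log (condProb p {i} (prefixC A r) x))
            ≤ ∑ _i ∈ A r, f / ((A r).card : ℝ) := Finset.sum_le_sum (hlogq r)
          _ = ((A r).card : ℝ) * (f / ((A r).card : ℝ)) := by
              rw [Finset.sum_const, nsmul_eq_mul]
          _ = f := by field_simp
    calc ∑ r : Fin R, ∑ i ∈ A r, (-Real.log (condProb p {i} (prefixC A r) x))
        ≤ ∑ _r : Fin R, f := Finset.sum_le_sum fun r _ => hround r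
      _ = (R : ℝ) * f := by rw [Finset.sum_const, nsmul_eq_mul, Finset.card_univ, Fintype.card_fin]
  have goal2 : (-Real.log (p x) - ε) / f ≤ (R : ℝ) := by
    rw [div_le_iff₀ hf0]
    have habs : -Real.log (p x) -
        ∑ r : Fin R, ∑ i ∈ A r, (-Real.log (condProb p {i} (prefixC A r) x)) ≤ ε := by
      rw [hε]; exact le_abs_self _
    linarith
  exact max_le goal1 goal2
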